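/- The integral ∫₀¹ (1 - e^{-p} - e^{-1/p})/p dp equals the Euler–Mascheroni constant γ. -/

import Mathlib

/-!
`Γ'(1) = ∫₀^∞ log t e^{-t} dt = -γ`. Split this integral at `1` and integrate by parts with the
antiderivatives `(1 - e^{-t}) log t` on `(0, 1]` and `-e^{-t} log t` on `[1, ∞)`, whose boundary
values at `0`, `1` and `∞` all vanish: `-γ = -∫₀¹ (1 - e^{-t})/t dt + ∫₁^∞ e^{-t}/t dt`.
The substitution `t = 1/p` turns the last integral into `∫₀¹ e^{-1/p}/p dp`.
-/

open MeasureTheory Set Real Filter Topology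

section InvSubstitution

variable (g : ℝ → ℝ)

theorem image_inv_Ioi_one : Inv.inv '' Ioi (1:ℝ) = Ioo 0 1 := by
  rw [image_inv_eq_inv, inv_Ioi₀ one_pos, inv_one]

theorem hasDerivWithinAt_inv_Ioi_one :
    ∀ t ∈ Ioi (1:ℝ), HasDerivWithinAt Inv.inv (-(t ^ 2)⁻¹) (Ioi 1) t :=
  fun _ ht => (hasDerivAt_inv (one_pos.trans ht).ne').hasDerivWithinAt

theorem abs_neg_inv_sq_smul_comp_inv_div {t : ℝ} (ht : t ∈ Ioi (1:ℝ)) :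
    |-(t ^ 2)⁻¹| • (g t⁻¹⁻¹ / t⁻¹) = g t / t := by
  have : t ≠ 0 := (one_pos.trans ht).ne'
  rw [abs_neg, abs_of_pos (by positivity), inv_inv, smul_eq_mul]
  field_simp

theorem integrableOn_comp_inv_div_Ioo_zero_one_iff :
    IntegrableOn (fun p => g p⁻¹ / p) (Ioo 0 1) ↔ IntegrableOn (fun t => g t / t) (Ioi 1) := by
  rw [← image_inv_Ioi_one, integrableOn_image_iff_integrableOn_abs_deriv_smul measurableSet_Ioi
    hasDerivWithinAt_inv_Ioi_one inv_injective.injOn]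
  exact integrableOn_congr_fun (fun t ht => abs_neg_inv_sq_smul_comp_inv_div g ht)
    measurableSet_Ioi

theorem integral_comp_inv_div_Ioo_zero_one :
    ∫ p in Ioo 0 1, g p⁻¹ / p = ∫ t in Ioi 1, g t / t := by
  rw [← image_inv_Ioi_one, integral_image_eq_integral_abs_deriv_smul measurableSet_Ioi
    hasDerivWithinAt_inv_Ioi_one inv_injective.injOn]
  exact setIntegral_congr_fun measurableSet_Ioi
    (fun t ht => abs_neg_inv_sq_smul_comp_inv_div g ht)

end InvSubstitution

theorem integral_log_mul_exp_neg_Ioi_zero :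
    ∫ t in Ioi (0:ℝ), log t * exp (-t) = -eulerMascheroniConstant := by
  have hGamma : Complex.Gamma =ᶠ[𝓝 1] Complex.GammaIntegral := by
    filter_upwards [Complex.continuous_re.isOpen_preimage _ isOpen_Ioi |>.mem_nhds
      (by simp : (1:ℂ) ∈ Complex.re ⁻¹' Ioi 0)] with s hs using Complex.Gamma_eq_integral hs
  have hGamma_deriv := (Complex.hasDerivAt_GammaIntegral (s := 1) (by simp)).congr_of_eventuallyEq
    hGamma |>.unique Complex.hasDerivAt_Gamma_one
  simp only [sub_self, Complex.cpow_zero, one_mul, ← Complex.ofReal_mul,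
    ← Complex.ofReal_neg] at hGamma_deriv
  exact_mod_cast hGamma_deriv

/- The integral is `-γ ≠ 0`, while a non-integrable function has Bochner integral `0`. -/
theorem integrableOn_log_mul_exp_neg_Ioi_zero :
    IntegrableOn (fun t => log t * exp (-t)) (Ioi 0) :=
  Integrable.of_integral_ne_zero <| by
    rw [integral_log_mul_exp_neg_Ioi_zero, neg_ne_zero]
    exact (one_half_pos.trans one_half_lt_eulerMascheroniConstant).ne'

theorem integrableOn_exp_neg_div_Ioi_one : IntegrableOn (fun t => exp (-t) / t) (Ioi 1) := by
  refine (exp_neg_integrableOn_Ioi 1 one_pos).integrable.mono'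
    (by fun_prop : Measurable fun t : ℝ => exp (-t) / t).aestronglyMeasurable ?_
  filter_upwards [self_mem_ae_restrict measurableSet_Ioi] with t (ht : 1 < t)
  rw [norm_div, norm_of_nonneg (exp_pos _).le, norm_of_nonneg (by linarith), neg_one_mul]
  exact div_le_self (exp_pos _).le ht.le

theorem intervalIntegrable_one_sub_exp_neg_div :
    IntervalIntegrable (fun t => (1 - exp (-t)) / t) volume 0 1 := by
  rw [intervalIntegrable_iff_integrableOn_Ioc_of_le zero_le_one]
  refine Measure.integrableOn_of_bounded (M := 1) measure_Ioc_lt_top.ne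
    (by fun_prop : Measurable fun t : ℝ => (1 - exp (-t)) / t).aestronglyMeasurable ?_
  filter_upwards [self_mem_ae_restrict measurableSet_Ioc] with t ht
  rw [norm_div, norm_of_nonneg (by simpa using ht.1.le), norm_of_nonneg ht.1.le]
  exact div_le_one_of_le₀ (by linarith [one_sub_le_exp_neg t]) ht.1.le

theorem integral_log_mul_exp_neg_Ioi_one :
    ∫ t in Ioi 1, log t * exp (-t) = ∫ t in Ioi 1, exp (-t) / t := by
  have hderiv (t : ℝ) (ht : 0 < t) : HasDerivAt (fun t => -(exp (-t) * log t))
      (log t * exp (-t) - exp (-t) / t) t := by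
    refine (((hasDerivAt_neg t).exp).fun_mul (hasDerivAt_log ht.ne')).fun_neg.congr_deriv ?_
    field_simp
    ring
  have hlim : Tendsto (fun t => -(exp (-t) * log t)) atTop (𝓝 0) := by
    refine squeeze_zero_norm' ?_ (by simpa using tendsto_pow_mul_exp_neg_atTop_nhds_zero 1)
    filter_upwards [eventually_ge_atTop 1] with t ht
    rw [norm_neg, norm_mul, norm_of_nonneg (exp_pos _).le, norm_of_nonneg (log_nonneg ht),
      mul_comm]
    exact mul_le_mul_of_nonneg_right ((log_le_sub_one_of_pos (by linarith)).trans (by linarith))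
      (exp_pos _).le
  have hint := integrableOn_log_mul_exp_neg_Ioi_zero.mono_set (Ioi_subset_Ioi zero_le_one)
  have h := integral_Ioi_of_hasDerivAt_of_tendsto
    (hderiv 1 one_pos).continuousAt.continuousWithinAt
    (fun t ht => hderiv t (one_pos.trans ht)) (hint.sub integrableOn_exp_neg_div_Ioi_one) hlim
  rw [integral_sub hint integrableOn_exp_neg_div_Ioi_one] at h
  simpa [sub_eq_zero] using h

theorem integral_log_mul_exp_neg_zero_one :
    ∫ t in (0:ℝ)..1, log t * exp (-t) = -∫ t in (0:ℝ)..1, (1 - exp (-t)) / t := by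
  have hderiv (t : ℝ) (ht : 0 < t) : HasDerivAt (fun t => (1 - exp (-t)) * log t)
      (log t * exp (-t) + (1 - exp (-t)) / t) t := by
    refine (((hasDerivAt_neg t).exp).const_sub 1 |>.fun_mul
      (hasDerivAt_log ht.ne')).congr_deriv ?_
    field_simp
  have hlim_zero : Tendsto (fun t => (1 - exp (-t)) * log t) (𝓝[>] 0) (𝓝 0) := by
    refine squeeze_zero_norm' ?_ (by simpa using
      (continuous_mul_log.tendsto 0).norm.mono_left nhdsWithin_le_nhds)
    filter_upwards [self_mem_nhdsWithin] with t (ht : 0 < t)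
    have hpos : 0 ≤ 1 - exp (-t) := by simpa using ht.le
    rw [norm_mul, norm_of_nonneg hpos, Real.norm_eq_abs]
    gcongr
    exact (sub_le_comm.mp (one_sub_le_exp_neg t)).trans (le_abs_self t)
  have hlim_one : Tendsto (fun t => (1 - exp (-t)) * log t) (𝓝[<] 1) (𝓝 0) := by
    simpa using (hderiv 1 one_pos).continuousAt.tendsto.mono_left nhdsWithin_le_nhds
  have hlog : IntervalIntegrable (fun t => log t * exp (-t)) volume 0 1 :=
    (intervalIntegrable_iff_integrableOn_Ioc_of_le zero_le_one).mpr
      (integrableOn_log_mul_exp_neg_Ioi_zero.mono_set Ioc_subset_Ioi_self)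
  have h := intervalIntegral.integral_eq_sub_of_hasDerivAt_of_tendsto one_pos
    (fun t ht => hderiv t ht.1) (hlog.add intervalIntegrable_one_sub_exp_neg_div) hlim_zero hlim_one
  rw [intervalIntegral.integral_add hlog intervalIntegrable_one_sub_exp_neg_div, sub_zero] at h
  linarith

theorem intervalIntegrable_exp_neg_one_div_div :
    IntervalIntegrable (fun p => exp (-1/p) / p) volume 0 1 := by
  rw [intervalIntegrable_iff_integrableOn_Ioc_of_le zero_le_one,
    integrableOn_Ioc_iff_integrableOn_Ioo]
  simp_rw [neg_div, one_div]
  exact (integrableOn_comp_inv_div_Ioo_zero_one_iff _).mpr integrableOn_exp_neg_div_Ioi_one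

theorem integral_exp_neg_one_div_div_zero_one :
    ∫ p in (0:ℝ)..1, exp (-1/p) / p = ∫ t in Ioi 1, exp (-t) / t := by
  rw [intervalIntegral.integral_of_le zero_le_one, integral_Ioc_eq_integral_Ioo]
  simp_rw [neg_div, one_div]
  exact integral_comp_inv_div_Ioo_zero_one fun t => exp (-t)

theorem stmt_1 :
    ∫ p in (0:ℝ)..1, (1 - Real.exp (-p) - Real.exp (-1/p)) / p
      = Real.eulerMascheroniConstant := by
  have hsplit : ∫ t in Ioi 0, log t * exp (-t)
      = (∫ t in (0:ℝ)..1, log t * exp (-t)) + ∫ t in Ioi 1, log t * exp (-t) := by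
    rw [intervalIntegral.integral_of_le zero_le_one, ← setIntegral_union (Ioc_disjoint_Ioi le_rfl)
      measurableSet_Ioi (integrableOn_log_mul_exp_neg_Ioi_zero.mono_set Ioc_subset_Ioi_self)
      (integrableOn_log_mul_exp_neg_Ioi_zero.mono_set (Ioi_subset_Ioi zero_le_one)),
      Ioc_union_Ioi_eq_Ioi zero_le_one]
  calc ∫ p in (0:ℝ)..1, (1 - exp (-p) - exp (-1/p)) / p
      = (∫ p in (0:ℝ)..1, (1 - exp (-p)) / p) - ∫ p in (0:ℝ)..1, exp (-1/p) / p := by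
        rw [← intervalIntegral.integral_sub intervalIntegrable_one_sub_exp_neg_div
          intervalIntegrable_exp_neg_one_div_div]
        simp only [sub_div]
    _ = -(∫ t in (0:ℝ)..1, log t * exp (-t)) - ∫ t in Ioi 1, log t * exp (-t) := by
        rw [integral_log_mul_exp_neg_zero_one, integral_log_mul_exp_neg_Ioi_one,
          integral_exp_neg_one_div_div_zero_one, neg_neg]
    _ = -∫ t in Ioi 0, log t * exp (-t) := by rw [hsplit]; ring
    _ = eulerMascheroniConstant := by rw [integral_log_mul_exp_neg_Ioi_zero, neg_neg]
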